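/- Let f : E → ℝ be differentiable with gradient ∇f, μ-smooth and λ-strongly convex with 0 < λ ≤ μ, and let θ* be a global minimizer of f. Fix a step size η with 0 < η < 2/μ and let (θ^s) be the gradient descent iterates θ^{s+1} = θ^s − η·∇f(θ^s) started from any θ^0 ∈ E. Then for every ε > 0 there exists S ∈ ℕ such that ‖θ^s − θ*‖ ≤ ε for all s ≥ S; in particular θ^s converges to θ* as s → ∞. -/

import Mathlib

open RealInnerProductSpace

/-- Derivative of the 1-D restriction of `f` along a segment. -/
lemma hasDerivAt_line {E : Type*} [NormedAddCommGroup E] [InnerProductSpace ℝ E]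
    [CompleteSpace E]
    (f : E → ℝ) (f' : E → E) (hdiff : ∀ x, HasGradientAt f (f' x) x)
    (x d : E) (t : ℝ) :
    HasDerivAt (fun t : ℝ => f (x + t • d)) ⟪f' (x + t • d), d⟫ t := by
  have h1 : HasDerivAt (fun t : ℝ => x + t • d) d t := by
    simpa using (((hasDerivAt_id t).smul_const d).const_add x)
  have h2 := (hdiff (x + t • d)).hasFDerivAt
  have h3 := h2.comp_hasDerivAt t h1
  simpa [InnerProductSpace.toDual_apply_apply, Function.comp_def] using h3

/-- Descent lemma: μ-smoothness gives a quadratic upper bound. -/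
lemma descent_lemma {E : Type*} [NormedAddCommGroup E] [InnerProductSpace ℝ E]
    [CompleteSpace E]
    (f : E → ℝ) (f' : E → E) (μ : ℝ)
    (hdiff : ∀ x, HasGradientAt f (f' x) x)
    (hsmooth : ∀ x y, ‖f' x - f' y‖ ≤ μ * ‖x - y‖) (x y : E) :
    f y ≤ f x + ⟪f' x, y - x⟫ + μ / 2 * ‖y - x‖ ^ 2 := by
  set d := y - x with hd
  set g : ℝ → ℝ := fun t => f (x + t • d) - t * ⟪f' x, d⟫ - μ * t ^ 2 / 2 * ‖d‖ ^ 2 with hg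
  have hderiv : ∀ t : ℝ, HasDerivAt g
      (⟪f' (x + t • d), d⟫ - ⟪f' x, d⟫ - μ * t * ‖d‖ ^ 2) t := by
    intro t
    have h1 := hasDerivAt_line f f' hdiff x d t
    have h2 : HasDerivAt (fun t : ℝ => t * ⟪f' x, d⟫) ⟪f' x, d⟫ t := by
      simpa using (hasDerivAt_id t).mul_const (⟪f' x, d⟫)
    have h3 : HasDerivAt (fun t : ℝ => μ * t ^ 2 / 2 * ‖d‖ ^ 2) (μ * t * ‖d‖ ^ 2) t := by
      have : HasDerivAt (fun t : ℝ => t ^ 2) (2 * t) t := by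
        simpa using hasDerivAt_pow 2 t
      have := ((this.const_mul μ).div_const 2).mul_const (‖d‖ ^ 2)
      rwa [show μ * (2 * t) / 2 * ‖d‖ ^ 2 = μ * t * ‖d‖ ^ 2 by ring] at this
    exact (h1.sub h2).sub h3
  have hanti : AntitoneOn g (Set.Icc 0 1) := by
    apply antitoneOn_of_deriv_nonpos (convex_Icc 0 1)
    · exact fun t _ => (hderiv t).continuousAt.continuousWithinAt
    · exact fun t _ => ((hderiv t).differentiableAt).differentiableWithinAt
    · intro t ht
      rw [(hderiv t).deriv]
      rw [interior_Icc] at ht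
      have ht0 : 0 < t := ht.1
      have key : ⟪f' (x + t • d) - f' x, d⟫ ≤ μ * t * ‖d‖ ^ 2 := by
        calc ⟪f' (x + t • d) - f' x, d⟫ ≤ ‖f' (x + t • d) - f' x‖ * ‖d‖ :=
              real_inner_le_norm _ _
          _ ≤ (μ * ‖(x + t • d) - x‖) * ‖d‖ := by
              have := hsmooth (x + t • d) x
              exact mul_le_mul_of_nonneg_right this (norm_nonneg d)
          _ = μ * t * ‖d‖ ^ 2 := by
              rw [show (x + t • d) - x = t • d by abel, norm_smul]
              simp [abs_of_pos ht0]
              ring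
      rw [inner_sub_left] at key
      linarith
  have h01 : g 1 ≤ g 0 := hanti (Set.left_mem_Icc.2 zero_le_one)
    (Set.right_mem_Icc.2 zero_le_one) zero_le_one
  have e1 : x + (1 : ℝ) • d = y := by rw [hd]; simp
  have e0 : x + (0 : ℝ) • d = x := by simp
  rw [hg] at h01
  simp only [e1, e0, one_mul, one_pow, zero_mul, mul_zero] at h01
  simp only [ne_eq, OfNat.ofNat_ne_zero, not_false_eq_true, zero_pow, mul_zero, zero_div,
    sub_zero] at h01
  linarith

/-- **Convergence of gradient descent iterates.** Under `μ`-smoothness and `λ`-strong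
convexity with `0 < λ ≤ μ`, global minimizer `θ*`, and step size `0 < η < 2/μ`, the
gradient descent iterates get within any `ε > 0` of `θ*` after finitely many steps, and
in particular converge to `θ*`. -/
theorem gradient_descent_iterates_converge
    {E : Type*} [NormedAddCommGroup E] [InnerProductSpace ℝ E] [CompleteSpace E]
    (f : E → ℝ) (f' : E → E) (μ lam : ℝ) (hlam : 0 < lam) (hlamμ : lam ≤ μ)
    (hdiff : ∀ x, HasGradientAt f (f' x) x)
    (hsmooth : ∀ x y, ‖f' x - f' y‖ ≤ μ * ‖x - y‖)
    (hsc : ∀ x y, f y ≥ f x + ⟪f' x, y - x⟫ + lam / 2 * ‖y - x‖ ^ 2)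
    (θstar : E) (hmin : ∀ θ, f θstar ≤ f θ)
    (η : ℝ) (hη : 0 < η) (hη2 : η < 2 / μ)
    (θseq : ℕ → E) (hiter : ∀ s : ℕ, θseq (s + 1) = θseq s - η • f' (θseq s)) :
    (∀ ε > 0, ∃ S : ℕ, ∀ s ≥ S, ‖θseq s - θstar‖ ≤ ε) ∧
      Filter.Tendsto θseq Filter.atTop (nhds θstar) := by
  have hμ : 0 < μ := lt_of_lt_of_le hlam hlamμ
  have hημ : η * μ < 2 := by
    have := (lt_div_iff₀ hμ).mp hη2
    linarith
  -- gradient at minimizer is zero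
  have hgrad0 : f' θstar = 0 := by
    have hloc : IsLocalMin f θstar := (isMinOn_univ_iff.2 hmin).isLocalMin
      (by simp [Filter.univ_mem])
    have := hloc.hasFDerivAt_eq_zero (hdiff θstar).hasFDerivAt
    have h2 : (InnerProductSpace.toDual ℝ E) (f' θstar) = 0 := by
      exact_mod_cast this
    simpa using (InnerProductSpace.toDual ℝ E).map_eq_zero_iff.mp h2
  -- strong convexity lower bound on distance
  have hdist : ∀ x : E, lam / 2 * ‖x - θstar‖ ^ 2 ≤ f x - f θstar := by
    intro x
    have := hsc θstar x
    rw [hgrad0] at this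
    simp at this
    linarith
  -- PL inequality: ‖f' x‖² ≥ 2λ (f x - f*)
  have hPL : ∀ x : E, 2 * lam * (f x - f θstar) ≤ ‖f' x‖ ^ 2 := by
    intro x
    have h1 := hsc x θstar
    have h2 : ⟪f' x, θstar - x⟫ ≥ -(‖f' x‖ * ‖θstar - x‖) := by
      have := abs_real_inner_le_norm (f' x) (θstar - x)
      have := neg_abs_le (⟪f' x, θstar - x⟫)
      nlinarith [abs_real_inner_le_norm (f' x) (θstar - x)]
    nlinarith [sq_nonneg (‖f' x‖ - lam * ‖θstar - x‖), norm_nonneg (f' x),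
      norm_nonneg (θstar - x), hlam]
  set c : ℝ := 1 - lam * η * (2 - μ * η) with hc
  have hc1 : c < 1 := by
    have : 0 < lam * η * (2 - μ * η) := by
      apply mul_pos (mul_pos hlam hη); nlinarith
    linarith
  have hc0 : 0 ≤ c := by nlinarith [mul_pos hlam hη, sq_nonneg (1 - μ * η)]
  -- contraction on function values
  set D : ℕ → ℝ := fun s => f (θseq s) - f θstar with hD
  have hDnn : ∀ s, 0 ≤ D s := fun s => sub_nonneg.2 (hmin (θseq s))
  have hstep : ∀ s, D (s + 1) ≤ c * D s := by
    intro s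
    have hdes := descent_lemma f f' μ hdiff hsmooth (θseq s) (θseq s - η • f' (θseq s))
    have e1 : θseq s - η • f' (θseq s) - θseq s = -(η • f' (θseq s)) := by abel
    rw [e1] at hdes
    have e2 : ⟪f' (θseq s), -(η • f' (θseq s))⟫ = -(η * ‖f' (θseq s)‖ ^ 2) := by
      rw [inner_neg_right, real_inner_smul_right, real_inner_self_eq_norm_sq]
      try ring
    have e3 : ‖-(η • f' (θseq s))‖ ^ 2 = η ^ 2 * ‖f' (θseq s)‖ ^ 2 := by
      rw [norm_neg, norm_smul, mul_pow, Real.norm_eq_abs, abs_of_pos hη]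
      try ring
    rw [e2, e3] at hdes
    have hPLx := hPL (θseq s)
    have hcoef : 0 ≤ η * (1 - μ * η / 2) := by
      apply mul_nonneg hη.le; nlinarith
    have h2 : η * (1 - μ * η / 2) * (2 * lam * (f (θseq s) - f θstar))
        ≤ η * (1 - μ * η / 2) * ‖f' (θseq s)‖ ^ 2 :=
      mul_le_mul_of_nonneg_left hPLx hcoef
    show f (θseq (s + 1)) - f θstar ≤ (1 - lam * η * (2 - μ * η)) * (f (θseq s) - f θstar)
    rw [hiter s]
    nlinarith [hdes, h2]
  have hgeo : ∀ s, D s ≤ c ^ s * D 0 := by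
    intro s
    induction s with
    | zero => simp
    | succ n ih =>
      calc D (n + 1) ≤ c * D n := hstep n
        _ ≤ c * (c ^ n * D 0) := mul_le_mul_of_nonneg_left ih hc0
        _ = c ^ (n + 1) * D 0 := by ring
  -- D s → 0
  have hDto : Filter.Tendsto D Filter.atTop (nhds 0) := by
    have hpow : Filter.Tendsto (fun s : ℕ => c ^ s * D 0) Filter.atTop (nhds 0) := by
      have := (tendsto_pow_atTop_nhds_zero_of_lt_one hc0 hc1).mul_const (D 0)
      simpa using this
    exact squeeze_zero hDnn hgeo hpow
  -- norm tendsto zero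
  have hnorm : Filter.Tendsto (fun s => ‖θseq s - θstar‖) Filter.atTop (nhds 0) := by
    have hb : ∀ s, ‖θseq s - θstar‖ ≤ Real.sqrt (2 / lam * D s) := by
      intro s
      rw [show ‖θseq s - θstar‖ = Real.sqrt (‖θseq s - θstar‖ ^ 2) by
        rw [Real.sqrt_sq (norm_nonneg _)]]
      apply Real.sqrt_le_sqrt
      have := hdist (θseq s)
      rw [div_mul_eq_mul_div, le_div_iff₀ hlam]
      simp only [hD] at this ⊢
      nlinarith
    have hsq : Filter.Tendsto (fun s => Real.sqrt (2 / lam * D s)) Filter.atTop (nhds 0) := by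
      have h1 : Filter.Tendsto (fun s => 2 / lam * D s) Filter.atTop (nhds 0) := by
        have := hDto.const_mul (2 / lam)
        simpa using this
      have := (Real.continuous_sqrt.tendsto 0).comp h1
      simpa [Function.comp_def] using this
    exact squeeze_zero (fun s => norm_nonneg _) hb hsq
  have htend : Filter.Tendsto θseq Filter.atTop (nhds θstar) :=
    tendsto_iff_norm_sub_tendsto_zero.mpr hnorm
  refine ⟨?_, htend⟩
  intro ε hε
  have := (Filter.tendsto_atTop'.mp hnorm) (Set.Iio ε) (Iio_mem_nhds hε)
  obtain ⟨S, hS⟩ := this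
  exact ⟨S, fun s hs => le_of_lt (hS s hs)⟩
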